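/- For all sufficiently large real x, (log 2) · x / log x < π(x) < (2 log 2) · x / log x. -/

import Mathlib

/-!
Chebyshev's method. The weight `E(m) = m - ⌊m/2⌋ - ⌊m/3⌋ - ⌊m/5⌋ + ⌊m/30⌋` only takes the values
`0` and `1`, and equals `1` for `1 ≤ m ≤ 5`. Hence `S(N) = ∑ₙ Λ(n) E(N/n)` satisfies
`θ(N) - θ(N/6) ≤ S(N) ≤ ψ(N)`. On the other hand `∑ₙ Λ(n) ⌊N/n⌋ = log N!`, so `S(N)` is an
alternating sum of five log-factorials, and Stirling gives `S(N) = A N + O(log N)` with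
`A = log 2/2 + log 3/3 + log 5/5 - log 30/30 ≈ 0.921`. Since `log 2 < A` and `6A/5 < 2 log 2`,
the lower bound follows from `ψ(x) ≤ π(x) log x`, and the upper bound from `θ(x) ≤ C + c x` for
some `c < 2 log 2` (iterating `N ↦ N/6`) together with `π(x) = θ(x)/log x + o(x/log x)`.
-/

/-- `π x`, the number of primes `≤ x`. -/
noncomputable def primePi (x : ℝ) : ℕ := ((Finset.Icc 1 ⌊x⌋₊).filter Nat.Prime).card

open Finset Real Chebyshev Filter
open ArithmeticFunction hiding log

lemma primePi_eq_primeCounting_floor (x : ℝ) : primePi x = Nat.primeCounting ⌊x⌋₊ := by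
  rw [primePi, ← Nat.primesLE_card_eq_primeCounting]
  congr 1
  ext p
  simp only [mem_filter, mem_Icc, Nat.mem_primesLE]
  exact ⟨fun h => ⟨h.1.2, h.2⟩, fun h => ⟨⟨h.2.one_le, h.1⟩, h.2⟩⟩

lemma sum_Ioc_log_eq_log_factorial (N : ℕ) : ∑ n ∈ Ioc 0 N, log n = log N.factorial := by
  induction N with
  | zero => simp
  | succ N ih =>
    rw [sum_Ioc_succ_top N.zero_le, ih, Nat.factorial_succ, Nat.cast_mul,
      log_mul (by positivity) (by positivity), add_comm]

lemma sum_vonMangoldt_mul_div_div (N k : ℕ) :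
    ∑ n ∈ Ioc 0 N, Λ n * ((N / n / k : ℕ) : ℝ) = log (N / k).factorial := by
  have hdiv : ∀ n, N / n / k = N / k / n := fun n => by
    rw [Nat.div_div_eq_div_mul, Nat.div_div_eq_div_mul, mul_comm]
  simp_rw [hdiv]
  rw [← sum_Ioc_log_eq_log_factorial, ← sum_subset (Ioc_subset_Ioc_right (N.div_le_self k)),
    ← sum_Ioc_mul_zeta_eq_sum, vonMangoldt_mul_zeta]
  · simp
  · intro n hn hn'
    simp only [mem_Ioc, not_and, not_le] at hn hn'
    simp [Nat.div_eq_of_lt (hn' hn.1)]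

lemma log_factorial_le (n : ℕ) : log n.factorial ≤ n * log n - n + log n / 2 + 1 := by
  rcases n with _ | m
  · simp
  have hseq : Stirling.stirlingSeq (m + 1) ≤ exp 1 / √2 := by
    simpa using Stirling.stirlingSeq'_antitone (Nat.zero_le m)
  have hlog := log_le_log (Stirling.stirlingSeq'_pos m) hseq
  rw [Stirling.log_stirlingSeq_formula, log_div (exp_pos 1).ne' (by positivity), log_exp,
    log_sqrt zero_le_two, log_mul two_ne_zero (by positivity),
    log_div (by positivity) (exp_pos 1).ne', log_exp] at hlog
  linarith

lemma sub_le_log_factorial (n : ℕ) : n * log n - n ≤ log n.factorial := by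
  rcases Nat.eq_zero_or_pos n with rfl | hn
  · simp
  have := Stirling.le_log_factorial_stirling hn.ne'
  have : 0 ≤ log n := log_natCast_nonneg n
  have : 0 ≤ log (2 * π) := log_nonneg (by linarith [pi_gt_three])
  linarith

lemma abs_log_factorial_floor_sub_le {y : ℝ} (hy : 1 ≤ y) :
    |log (⌊y⌋₊).factorial - (y * log y - y)| ≤ log y + 1 := by
  set n := ⌊y⌋₊
  have hn : (1 : ℝ) ≤ n := by exact_mod_cast Nat.one_le_floor_iff y |>.mpr hy
  have hny : (n : ℝ) ≤ y := Nat.floor_le (by linarith)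
  have hyn : y - n ≤ 1 := by linarith [Nat.lt_floor_add_one y]
  have hlogn : 0 ≤ log n := log_nonneg hn
  have hlogny : log n ≤ log y := log_le_log (by linarith) hny
  have hratio : log y - log n = log (y / n) := (log_div (by linarith) (by linarith)).symm
  -- `t ↦ t log t - t` has derivative `log t`, which lies in `[log n, log y]` on `[n, y]`
  have hupper : y * log y - y - (n * log n - n) ≤ (y - n) * log y := by
    have h := log_le_sub_one_of_pos (show 0 < y / n by positivity)
    have : n * (log y - log n) ≤ y - n := by
      rw [hratio]
      calc n * log (y / n) ≤ n * (y / n - 1) := by gcongr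
        _ = y - n := by field_simp
    linarith
  have hlower : (y - n) * log n ≤ y * log y - y - (n * log n - n) := by
    have h := one_sub_inv_le_log_of_pos (show 0 < y / n by positivity)
    have : y - n ≤ y * (log y - log n) := by
      rw [hratio]
      calc y - n = y * (1 - (y / n)⁻¹) := by field_simp
        _ ≤ y * log (y / n) := by gcongr
    linarith
  have := mul_le_of_le_one_left (hlogn.trans hlogny) hyn
  have := mul_nonneg (sub_nonneg.mpr hny) hlogn
  have := log_factorial_le n
  have := sub_le_log_factorial n
  rw [abs_le]
  constructor <;> linarith

def chebyshevWeight (m : ℕ) : ℤ := m - (m / 2 : ℕ) - (m / 3 : ℕ) - (m / 5 : ℕ) + (m / 30 : ℕ)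

lemma chebyshevWeight_nonneg (m : ℕ) : 0 ≤ chebyshevWeight m := by
  unfold chebyshevWeight; omega

lemma chebyshevWeight_le_one (m : ℕ) : chebyshevWeight m ≤ 1 := by
  unfold chebyshevWeight; omega

lemma chebyshevWeight_eq_one {m : ℕ} (h0 : 0 < m) (h6 : m < 6) : chebyshevWeight m = 1 := by
  unfold chebyshevWeight; omega

noncomputable def chebyshevSum (N : ℕ) : ℝ := ∑ n ∈ Ioc 0 N, Λ n * chebyshevWeight (N / n)

lemma vonMangoldt_mul_chebyshevWeight_nonneg (N n : ℕ) : 0 ≤ Λ n * chebyshevWeight (N / n) :=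
  mul_nonneg vonMangoldt_nonneg (by exact_mod_cast chebyshevWeight_nonneg _)

lemma chebyshevSum_le_psi (N : ℕ) : chebyshevSum N ≤ ψ N := by
  rw [chebyshevSum, psi, Nat.floor_natCast]
  refine sum_le_sum fun n _ => mul_le_of_le_one_right vonMangoldt_nonneg ?_
  exact_mod_cast chebyshevWeight_le_one _

lemma theta_sub_theta_div_six_le (N : ℕ) : θ N - θ ↑(N / 6) ≤ chebyshevSum N := by
  have hsplit := sum_Ioc_consecutive (fun n => Λ n * chebyshevWeight (N / n))
    (Nat.zero_le (N / 6)) (N.div_le_self 6)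
  have htheta := sum_Ioc_consecutive (fun p => if p.Prime then log p else 0)
    (Nat.zero_le (N / 6)) (N.div_le_self 6)
  simp only [theta, Nat.floor_natCast, sum_filter] at htheta ⊢
  rw [chebyshevSum, ← hsplit, ← htheta, add_sub_cancel_left]
  have hrest : 0 ≤ ∑ n ∈ Ioc 0 (N / 6), Λ n * chebyshevWeight (N / n) :=
    sum_nonneg fun n _ => vonMangoldt_mul_chebyshevWeight_nonneg N n
  refine le_add_of_nonneg_of_le hrest (sum_le_sum fun p hp => ?_)
  split_ifs with hprime
  · rw [mem_Ioc] at hp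
    rw [vonMangoldt_apply_prime hprime, chebyshevWeight_eq_one, Int.cast_one, mul_one]
    · exact Nat.div_pos hp.2 hprime.pos
    · exact (Nat.div_lt_iff_lt_mul hprime.pos).mpr (by omega)
  · exact vonMangoldt_mul_chebyshevWeight_nonneg N p

lemma chebyshevSum_eq_log_factorial (N : ℕ) :
    chebyshevSum N = log N.factorial - log (N / 2).factorial - log (N / 3).factorial
      - log (N / 5).factorial + log (N / 30).factorial := by
  have h1 := sum_vonMangoldt_mul_div_div N 1
  simp only [Nat.div_one] at h1
  rw [← h1, ← sum_vonMangoldt_mul_div_div N 2, ← sum_vonMangoldt_mul_div_div N 3,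
    ← sum_vonMangoldt_mul_div_div N 5, ← sum_vonMangoldt_mul_div_div N 30, ← sum_sub_distrib,
    ← sum_sub_distrib, ← sum_sub_distrib, ← sum_add_distrib, chebyshevSum]
  refine sum_congr rfl fun n _ => ?_
  simp only [chebyshevWeight, Int.cast_add, Int.cast_sub, Int.cast_natCast]
  ring

noncomputable def chebyshevConst : ℝ := log 2 / 2 + log 3 / 3 + log 5 / 5 - log 30 / 30

lemma chebyshevConst_eq : chebyshevConst = log (2 ^ 14 * 3 ^ 9 * 5 ^ 5) / 30 := by
  rw [chebyshevConst, show (30 : ℝ) = 2 * 3 * 5 by norm_num]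
  simp only [log_mul, log_pow, ne_eq, OfNat.ofNat_ne_zero, not_false_eq_true, mul_ne_zero_iff,
    pow_ne_zero, and_self]
  push_cast
  ring

lemma log_two_lt_chebyshevConst : log 2 < chebyshevConst := by
  rw [chebyshevConst_eq, lt_div_iff₀ (by norm_num), mul_comm, ← Nat.cast_ofNat, ← log_pow]
  exact log_lt_log (by norm_num) (by norm_num)

lemma six_div_five_mul_chebyshevConst_lt : 6 / 5 * chebyshevConst < 2 * log 2 := by
  have : log (2 ^ 14 * 3 ^ 9 * 5 ^ 5) < log (2 ^ 50) := log_lt_log (by norm_num) (by norm_num)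
  rw [log_pow, Nat.cast_ofNat] at this
  calc 6 / 5 * chebyshevConst = log (2 ^ 14 * 3 ^ 9 * 5 ^ 5) / 25 := by
        rw [chebyshevConst_eq]; ring
    _ < 50 * log 2 / 25 := by gcongr
    _ = 2 * log 2 := by ring

lemma abs_chebyshevSum_sub_le {N : ℕ} (hN : 30 ≤ N) :
    |chebyshevSum N - chebyshevConst * N| ≤ 5 * (log N + 1) := by
  have hN0 : (0 : ℝ) < N := by positivity
  have key : ∀ k : ℕ, 0 < k → k ≤ N →
      |log (N / k).factorial - ((N / k : ℝ) * (log N - log k) - N / k)| ≤ log N + 1 := by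
    intro k hk hkN
    have hk' : (0 : ℝ) < k := by exact_mod_cast hk
    have h1 : 1 ≤ (N / k : ℝ) := by rw [one_le_div hk']; exact_mod_cast hkN
    have h := abs_log_factorial_floor_sub_le h1
    rw [Nat.floor_div_eq_div, log_div hN0.ne' hk'.ne'] at h
    have : log k ≥ 0 := log_natCast_nonneg k
    linarith
  have h1 := key 1 one_pos (by omega)
  have h2 := key 2 two_pos (by omega)
  have h3 := key 3 three_pos (by omega)
  have h5 := key 5 (by norm_num) (by omega)
  have h30 := key 30 (by norm_num) (by omega)
  simp only [Nat.div_one, Nat.cast_one, div_one, log_one, sub_zero] at h1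
  rw [abs_le] at *
  rw [chebyshevSum_eq_log_factorial, chebyshevConst]
  push_cast at *
  constructor <;> linarith

lemma le_add_of_le_div_add_sub {f h : ℕ → ℝ} {b N₀ : ℕ} {C : ℝ} (hb : 1 < b) (hN₀ : 0 < N₀)
    (hsmall : ∀ N < N₀, f N ≤ C + h N)
    (hstep : ∀ N, N₀ ≤ N → f N ≤ f (N / b) + (h N - h (N / b))) (N : ℕ) : f N ≤ C + h N := by
  induction N using Nat.strong_induction_on with
  | _ N ih =>
    rcases lt_or_ge N N₀ with hN | hN
    · exact hsmall N hN
    · have := ih (N / b) (Nat.div_lt_self (by omega) hb)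
      linarith [hstep N hN]

lemma eventually_mul_add_mul_log_add_lt {a b : ℝ} (hab : a < b) (c d : ℝ) :
    ∀ᶠ x in atTop, a * x + c * log x + d < b * x := by
  have hε : 0 < (b - a) / (2 * (|c| + 1)) := by positivity
  filter_upwards [isLittleO_log_id_atTop.bound hε, eventually_ge_atTop 0,
    eventually_gt_atTop (2 * d / (b - a))] with x hlog hx hxd
  rw [norm_eq_abs, id, norm_eq_abs, abs_of_nonneg hx] at hlog
  have hc : c * log x ≤ (b - a) / 2 * x := calc
    c * log x ≤ |c| * |log x| := by rw [← abs_mul]; exact le_abs_self _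
    _ ≤ (|c| + 1) * ((b - a) / (2 * (|c| + 1)) * x) := by gcongr; linarith
    _ = (b - a) / 2 * x := by field_simp
  have hd : d < (b - a) / 2 * x := by
    rw [div_lt_iff₀ (by linarith)] at hxd; linarith
  linarith

lemma exists_theta_le_add_mul {c : ℝ} (hc : 6 / 5 * chebyshevConst < c) :
    ∃ C, ∀ x, 0 ≤ x → θ x ≤ C + c * x := by
  have hc0 : 0 ≤ c := by linarith [log_two_lt_chebyshevConst, log_pos one_lt_two]
  obtain ⟨N₁, hN₁⟩ := eventually_atTop.mp <| tendsto_natCast_atTop_atTop.eventually <|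
    eventually_mul_add_mul_log_add_lt (show chebyshevConst < 5 / 6 * c by linarith) 5 5
  obtain ⟨N₀, hN₁₀, hN₀⟩ : ∃ N₀, N₁ ≤ N₀ ∧ 30 ≤ N₀ := ⟨max N₁ 30, le_max_left _ _, le_max_right _ _⟩
  have hrec : ∀ N : ℕ, θ N ≤ θ N₀ + c * N := by
    refine le_add_of_le_div_add_sub (f := fun N => θ N) (h := fun N => c * N) (b := 6) (N₀ := N₀)
      (by norm_num) (by omega) (fun N hN => ?_) (fun N hN => ?_)
    · have : θ N ≤ θ N₀ := theta_mono (by exact_mod_cast hN.le)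
      have : 0 ≤ c * N := by positivity
      linarith
    · have hS := (abs_le.mp (abs_chebyshevSum_sub_le (hN₀.trans hN))).2
      have hdiv : c * ((N / 6 : ℕ) : ℝ) ≤ c * (N / 6) :=
        mul_le_mul_of_nonneg_left Nat.cast_div_le hc0
      have := hN₁ N (hN₁₀.trans hN)
      have := theta_sub_theta_div_six_le N
      linarith
  refine ⟨θ N₀, fun x hx => ?_⟩
  rw [theta_eq_theta_coe_floor]
  have := mul_le_mul_of_nonneg_left (Nat.floor_le hx) hc0
  linarith [hrec ⌊x⌋₊]

lemma eventually_log_two_mul_div_log_lt_primeCounting :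
    ∀ᶠ x in atTop, log 2 * x / log x < Nat.primeCounting ⌊x⌋₊ := by
  filter_upwards [eventually_ge_atTop 30, eventually_mul_add_mul_log_add_lt
    log_two_lt_chebyshevConst 5 (chebyshevConst + 5)] with x hx hev
  have hN : 30 ≤ ⌊x⌋₊ := Nat.le_floor (by exact_mod_cast hx)
  have hfloor : x - 1 ≤ ⌊x⌋₊ := by linarith [Nat.lt_floor_add_one x]
  have hlog : log ⌊x⌋₊ ≤ log x := log_le_log (by positivity) (Nat.floor_le (by linarith))
  have hS := (abs_le.mp (abs_chebyshevSum_sub_le hN)).1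
  have hA : 0 ≤ chebyshevConst := by linarith [log_two_lt_chebyshevConst, log_pos one_lt_two]
  rw [div_lt_iff₀ (log_pos (by linarith))]
  calc log 2 * x < chebyshevConst * (x - 1) - 5 * (log x + 1) := by linarith
    _ ≤ chebyshevSum ⌊x⌋₊ := by
        have := mul_le_mul_of_nonneg_left hfloor hA
        linarith
    _ ≤ ψ x := by rw [psi_eq_psi_coe_floor]; exact chebyshevSum_le_psi _
    _ ≤ _ := psi_le_primeCounting_mul_log' x

lemma eventually_primeCounting_lt_two_mul_log_two_mul_div_log :
    ∀ᶠ x in atTop, (Nat.primeCounting ⌊x⌋₊ : ℝ) < 2 * log 2 * x / log x := by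
  obtain ⟨c, hc, hc2⟩ := exists_between six_div_five_mul_chebyshevConst_lt
  obtain ⟨C, hC⟩ := exists_theta_le_add_mul hc
  have hε : 0 < (2 * log 2 - c) / 2 := by linarith
  filter_upwards [eventually_ge_atTop 2, integral_theta_div_log_sq_isLittleO.bound hε,
    eventually_gt_atTop (C / ((2 * log 2 - c) / 2))] with x hx hint hxC
  have hlog : 0 < log x := log_pos (by linarith)
  rw [norm_eq_abs, norm_eq_abs, abs_of_nonneg (div_nonneg (by linarith) hlog.le)] at hint
  rw [primeCounting_eq_theta_div_log_add_integral hx]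
  rw [div_lt_iff₀ hε] at hxC
  calc θ x / log x + ∫ t in 2..x, θ t / (t * log t ^ 2)
      ≤ (C + c * x) / log x + (2 * log 2 - c) / 2 * (x / log x) := by
        gcongr
        · exact hC x (by linarith)
        · exact (le_abs_self _).trans hint
    _ = (C + (2 * log 2 + c) / 2 * x) / log x := by ring
    _ < 2 * log 2 * x / log x := by gcongr; linarith

theorem stmt_10 :
    ∃ X : ℝ, ∀ x : ℝ, X ≤ x →
      Real.log 2 * x / Real.log x < (primePi x : ℝ) ∧
      (primePi x : ℝ) < (2 * Real.log 2) * x / Real.log x := by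
  obtain ⟨X, hX⟩ := eventually_atTop.mp (eventually_log_two_mul_div_log_lt_primeCounting.and
    eventually_primeCounting_lt_two_mul_log_two_mul_div_log)
  exact ⟨X, fun x hx => by simpa only [primePi_eq_primeCounting_floor] using hX x hx⟩
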